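/- arXiv:2405.20308 — 3 statements merged into one kernel-verified Lean document; each statement's English description precedes it below -/
import Mathlib

section
/- Let $A$ be a real $n\times n$ matrix, $A^*$ the matrix $A$ with the last row $Y$ removed, and let $u_n,\dots,u_1$ be orthonormal right singular vectors of $A^*$ corresponding to the singular values $0=\sigma_n(A^*)\le \sigma_{n-1}(A^*)\le\cdots\le\sigma_1(A^*)$. Then for any real $x$ with $x^2$ not equal to any $\sigma_i(A^*)^2$, $\det(A^TA - x^2 I) = \prod_{i=1}^n(\sigma_i(A^*)^2 - x^2)\cdot\big(1 + \sum_{i=1}^n \frac{\langle u_i, Y\rangle^2}{\sigma_i(A^*)^2 - x^2}\big)$. -/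
open Matrix Finset

/-- Rank-one update determinant formula: if `A*` is `A` with the last row `Y` removed,
`u i` is an orthonormal basis of right singular vectors of `A*` with
`(A*)ᵀA* (u i) = σ i ^ 2 • u i`, then for any `x` with `x ^ 2 ≠ σ i ^ 2` for all `i`,
`det (AᵀA - x² I) = ∏ i (σ i ^ 2 - x ^ 2) * (1 + ∑ i ⟨u i, Y⟩² / (σ i ^ 2 - x ^ 2))`. -/
theorem det_rank_one_update (n : ℕ) (A : Matrix (Fin (n + 1)) (Fin (n + 1)) ℝ)
    (σ : Fin (n + 1) → ℝ) (u : Fin (n + 1) → Fin (n + 1) → ℝ)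
    (horth : ∀ i j, u i ⬝ᵥ u j = if i = j then (1 : ℝ) else 0)
    (heig : ∀ i,
      ((A.submatrix Fin.castSucc id)ᵀ * A.submatrix Fin.castSucc id).mulVec (u i) =
        (σ i ^ 2) • u i)
    (hσ : ∀ i, 0 ≤ σ i) (hσlast : σ (Fin.last n) = 0)
    (x : ℝ) (hx : ∀ i, x ^ 2 ≠ σ i ^ 2) :
    (Aᵀ * A - x ^ 2 • (1 : Matrix (Fin (n + 1)) (Fin (n + 1)) ℝ)).det =
      (∏ i, (σ i ^ 2 - x ^ 2)) *
        (1 + ∑ i, (u i ⬝ᵥ A (Fin.last n)) ^ 2 / (σ i ^ 2 - x ^ 2)) := by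
  set B := A.submatrix Fin.castSucc id with hB
  set Y : Fin (n+1) → ℝ := A (Fin.last n) with hY
  set U : Matrix (Fin (n+1)) (Fin (n+1)) ℝ := Matrix.of u with hU
  set c : Fin (n+1) → ℝ := fun i => u i ⬝ᵥ Y with hc
  set d : Fin (n+1) → ℝ := fun i => σ i ^ 2 - x ^ 2 with hd
  have hdne : ∀ i, d i ≠ 0 := fun i => sub_ne_zero.mpr fun h => hx i h.symm
  have hUUt : U * Uᵀ = 1 := by
    ext i j
    simpa [hU, mul_apply, dotProduct, Matrix.one_apply] using horth i j
  -- split AᵀA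
  have hsplit : Aᵀ * A = Bᵀ * B + vecMulVec Y Y := by
    ext i j
    simp only [Matrix.add_apply, mul_apply, transpose_apply, vecMulVec_apply, hB, hY,
      submatrix_apply, id_eq]
    rw [Fin.sum_univ_castSucc]
  -- conjugation
  have hconj : U * (Aᵀ * A - x ^ 2 • 1) * Uᵀ = diagonal d + vecMulVec c c := by
    have h1 : U * (Bᵀ * B) * Uᵀ = diagonal (fun i => σ i ^ 2) := by
      have hcol : (Bᵀ * B) * Uᵀ = Uᵀ * diagonal (fun i => σ i ^ 2) := by
        ext i j
        have := congrFun (heig j) i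
        simp only [mulVec, dotProduct, Pi.smul_apply, smul_eq_mul] at this
        simp only [mul_apply, transpose_apply, hU, Matrix.of_apply, diagonal_apply,
          Finset.sum_ite_eq, Finset.mem_univ, if_true]
        simpa [mul_comm, mul_apply, transpose_apply] using this
      rw [Matrix.mul_assoc, hcol, ← Matrix.mul_assoc, hUUt, Matrix.one_mul]
    have h2 : U * vecMulVec Y Y * Uᵀ = vecMulVec c c := by
      ext i j
      simp only [mul_apply, vecMulVec_apply, transpose_apply, hU, Matrix.of_apply, hc,
        dotProduct, Finset.sum_mul, Finset.mul_sum]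
      exact Finset.sum_congr rfl fun k _ => Finset.sum_congr rfl fun l _ => by ring
    have h3 : U * ((x ^ 2 : ℝ) • (1 : Matrix (Fin (n+1)) (Fin (n+1)) ℝ)) * Uᵀ
        = (x ^ 2 : ℝ) • 1 := by
      rw [Matrix.mul_smul, Matrix.mul_one, Matrix.smul_mul, hUUt]
    rw [hsplit]
    rw [Matrix.mul_sub, Matrix.sub_mul, Matrix.mul_add, Matrix.add_mul, h2, h3, h1]
    rw [hd]
    ext i j
    by_cases h : i = j <;> simp [diagonal_apply, h, sub_add_eq_add_sub]
  -- determinant preserved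
  have hdetU : U.det * U.det = 1 := by
    have := congrArg Matrix.det hUUt
    rwa [Matrix.det_mul, Matrix.det_transpose, Matrix.det_one] at this
  have hdet : (Aᵀ * A - x ^ 2 • 1).det = (diagonal d + vecMulVec c c).det := by
    rw [← hconj, Matrix.det_mul, Matrix.det_mul, Matrix.det_transpose]
    rw [mul_comm U.det, mul_assoc, hdetU, mul_one]
  rw [hdet]
  have hDinv : diagonal d * diagonal (fun i => (d i)⁻¹) = 1 := by
    rw [diagonal_mul_diagonal]
    ext i j
    rcases eq_or_ne i j with h | h
    · subst h; simp [diagonal_apply, Matrix.one_apply, mul_inv_cancel₀ (hdne i)]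
    · simp [diagonal_apply, Matrix.one_apply, h]
  have hfact : diagonal d + vecMulVec c c
      = diagonal d * (1 + (diagonal (fun i => (d i)⁻¹) * replicateCol (Fin 1) c) * replicateRow (Fin 1) c) := by
    rw [Matrix.mul_add, Matrix.mul_one, ← Matrix.mul_assoc, ← Matrix.mul_assoc, hDinv,
      Matrix.one_mul, vecMulVec_eq (ι := Fin 1) c c]
    rfl
  rw [hfact, Matrix.det_mul, Matrix.det_one_add_mul_comm, det_diagonal, Matrix.det_fin_one]
  congr 1
  simp only [Matrix.add_apply, Matrix.one_apply_eq, mul_apply, Matrix.replicateRow_apply,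
    Matrix.replicateCol_apply, diagonal_apply]
  congr 1
  refine Finset.sum_congr rfl fun i _ => ?_
  rw [Finset.sum_congr rfl fun j (_ : j ∈ univ) =>
    (by rw [ite_mul, zero_mul] : (if i = j then (d i)⁻¹ else 0) * c j
      = if i = j then (d i)⁻¹ * c j else 0), Finset.sum_ite_eq, if_pos (Finset.mem_univ i)]
  rw [hc, hd]
  field_simp
end

section
/- Let $A$ be a real $n\times n$ matrix, $Y$ its last row, $A^*$ the matrix $A$ with last row removed, $u$ a unit vector in $\ker(A^*)$, and $u_1,\dots,u_{n-1}$ orthonormal right singular vectors of $A^*$ with singular values $\sigma_1(A^*)\ge\cdots\ge\sigma_{n-1}(A^*)>0$. Define $\widetilde\chi^2(Y) = 1 + \sum_{i=1}^{n-1}\frac{\langle u_i,Y\rangle^2}{\sigma_i(A^*)^2}$. Suppose $\varepsilon>0$ and $\sigma_{n-1}(A^*)\ge \varepsilon^{3/4} n^{-1/2}$ with $\varepsilon \le 1/16$. If $\sigma_n(A)\le \varepsilon n^{-1/2}$ then $|\langle u, Y\rangle| \le (1+\varepsilon^{1/4})\,\varepsilon n^{-1/2}\,\widetilde\chi(Y)$.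 -/
open Matrix Finset

/-- The least singular value `σ_m(A) = min_{‖x‖₂ = 1} ‖A x‖₂` of a square matrix. -/
noncomputable def leastSingularValue {m : ℕ} (A : Matrix (Fin m) (Fin m) ℝ) : ℝ :=
  sInf {r | ∃ x : Fin m → ℝ, x ⬝ᵥ x = 1 ∧ r = Real.sqrt (A.mulVec x ⬝ᵥ A.mulVec x)}

lemma dot_sum_right {ι κ : Type*} [Fintype κ] (s : Finset ι) (x : κ → ℝ) (f : ι → κ → ℝ) :
    x ⬝ᵥ (∑ i ∈ s, f i) = ∑ i ∈ s, x ⬝ᵥ f i := by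
  simp only [dotProduct, Finset.sum_apply, Finset.mul_sum]
  exact Finset.sum_comm

lemma dot_sum_left {ι κ : Type*} [Fintype κ] (s : Finset ι) (x : κ → ℝ) (f : ι → κ → ℝ) :
    (∑ i ∈ s, f i) ⬝ᵥ x = ∑ i ∈ s, f i ⬝ᵥ x := by
  simp only [dotProduct, Finset.sum_apply, Finset.sum_mul]
  exact Finset.sum_comm

set_option maxHeartbeats 2000000 in
/-- If `σ_{n-1}(A*) ≥ ε^{3/4} n^{-1/2}` (with `0 < ε ≤ 1/16`) and
`σ_n(A) ≤ ε n^{-1/2}`, then `|⟨u, Y⟩| ≤ (1 + ε^{1/4}) ε n^{-1/2} χ̃(Y)`, where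
`χ̃(Y)² = 1 + ∑ i ⟨u_i, Y⟩²/σ_i(A*)²`, `u` is a unit kernel vector of `A*`, and the `u_i`
are orthonormal right singular vectors of `A*` (all orthogonal to `u`). -/
theorem abs_inner_le_of_least_singular_le (n : ℕ)
    (A : Matrix (Fin (n + 1)) (Fin (n + 1)) ℝ)
    (Astar : Matrix (Fin n) (Fin (n + 1)) ℝ)
    (hAstar : Astar = A.submatrix Fin.castSucc id)
    (Y : Fin (n + 1) → ℝ) (hY : Y = A (Fin.last n))
    (u : Fin (n + 1) → ℝ) (hker : Astar.mulVec u = 0) (hu : u ⬝ᵥ u = 1)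
    (v : Fin n → Fin (n + 1) → ℝ) (σ : Fin n → ℝ)
    (horth : ∀ i j, v i ⬝ᵥ v j = if i = j then (1 : ℝ) else 0)
    (huv : ∀ i, u ⬝ᵥ v i = 0)
    (hσpos : ∀ i, 0 < σ i)
    (heig : ∀ i, (Astarᵀ * Astar).mulVec (v i) = (σ i ^ 2) • v i)
    (ε : ℝ) (hε : 0 < ε) (hε16 : ε ≤ 1 / 16)
    (hσmin : ∀ i, ε ^ ((3 : ℝ) / 4) * ((n + 1 : ℕ) : ℝ) ^ (-(1 / 2 : ℝ)) ≤ σ i)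
    (hlsv : leastSingularValue A ≤ ε * ((n + 1 : ℕ) : ℝ) ^ (-(1 / 2 : ℝ))) :
    |u ⬝ᵥ Y| ≤ (1 + ε ^ ((1 : ℝ) / 4)) * ε * ((n + 1 : ℕ) : ℝ) ^ (-(1 / 2 : ℝ)) *
      Real.sqrt (1 + ∑ i, (v i ⬝ᵥ Y) ^ 2 / σ i ^ 2) := by
  set ν : ℝ := ((n + 1 : ℕ) : ℝ) ^ (-(1 / 2 : ℝ)) with hνdef
  have hνpos : 0 < ν := Real.rpow_pos_of_pos (by positivity) _
  set q : ℝ := ε ^ ((1 : ℝ) / 4) with hqdef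
  have hqpos : 0 < q := Real.rpow_pos_of_pos hε _
  have hq4 : q ^ 4 = ε := by
    rw [hqdef, ← Real.rpow_natCast (ε ^ ((1:ℝ)/4)) 4, ← Real.rpow_mul hε.le]
    norm_num
  have hq3 : q ^ 3 = ε ^ ((3 : ℝ) / 4) := by
    rw [hqdef, ← Real.rpow_natCast (ε ^ ((1:ℝ)/4)) 3, ← Real.rpow_mul hε.le]
    norm_num
  have hqhalf : q ≤ 1 / 2 := by
    have h1 : ε ^ ((1:ℝ)/4) ≤ (1/16 : ℝ) ^ ((1:ℝ)/4) :=
      Real.rpow_le_rpow hε.le hε16 (by norm_num)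
    have h2 : ((1:ℝ)/16) ^ ((1:ℝ)/4) = 1/2 := by
      rw [show ((1:ℝ)/16) = ((1:ℝ)/2) ^ (4:ℕ) by norm_num,
        ← Real.rpow_natCast ((1:ℝ)/2) 4, ← Real.rpow_mul (by norm_num)]
      norm_num
    rw [hqdef]; rw [h2] at h1; exact h1
  set S : ℝ := ∑ i, (v i ⬝ᵥ Y) ^ 2 / σ i ^ 2 with hSdef
  have hS0 : 0 ≤ S := Finset.sum_nonneg fun i _ => by positivity
  set Yu : ℝ := u ⬝ᵥ Y with hYudef
  set σm : ℝ := q ^ 3 * ν with hσmdef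
  have hσm : 0 < σm := by positivity
  have hσmle : ∀ i, σm ≤ σ i := fun i => by rw [hσmdef, hq3]; exact hσmin i
  set B : ℝ := (1 + S) + Yu ^ 2 / σm ^ 2 with hBdef
  have hB1 : 1 ≤ B := by
    have h0 : 0 ≤ Yu ^ 2 / σm ^ 2 := by positivity
    rw [hBdef]; linarith
  have hBpos : 0 < B := lt_of_lt_of_le one_pos hB1
  -- Key estimate for any approximate minimizer
  have key : ∀ x : Fin (n+1) → ℝ, x ⬝ᵥ x = 1 → ∀ t : ℝ, 0 < t →
      Real.sqrt (A *ᵥ x ⬝ᵥ A *ᵥ x) ≤ t → Yu ^ 2 ≤ t ^ 2 * B := by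
    intro x hx t ht hsq
    set U : Matrix (Fin (n+1)) (Fin (n+1)) ℝ := Matrix.of (Fin.snoc v u) with hUdef
    have hUc : ∀ i : Fin n, U i.castSucc = v i := by
      intro i
      show (Fin.snoc v u : Fin (n+1) → Fin (n+1) → ℝ) i.castSucc = v i
      exact Fin.snoc_castSucc _ _ _
    have hUl : U (Fin.last n) = u := by
      show (Fin.snoc v u : Fin (n+1) → Fin (n+1) → ℝ) (Fin.last n) = u
      exact Fin.snoc_last _ _
    have hUUT : U * Uᵀ = 1 := by
      ext i j
      have hij : (U * Uᵀ) i j = U i ⬝ᵥ U j := by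
        simp [Matrix.mul_apply, dotProduct, Matrix.transpose_apply]
      rw [hij, Matrix.one_apply]
      induction i using Fin.lastCases with
      | last =>
        induction j using Fin.lastCases with
        | last => rw [hUl, hu, if_pos rfl]
        | cast j' =>
          rw [hUl, hUc, huv j', if_neg (Fin.castSucc_lt_last j').ne']
      | cast i' =>
        induction j using Fin.lastCases with
        | last =>
          rw [hUl, hUc, dotProduct_comm, huv i',
            if_neg (Fin.castSucc_lt_last i').ne]
        | cast j' =>
          rw [hUc, hUc, horth i' j']
          by_cases h : i' = j'
          · rw [if_pos h, if_pos (by rw [h])]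
          · rw [if_neg h, if_neg (fun hc => h (Fin.castSucc_injective _ hc))]
    have hUTU : Uᵀ * U = 1 := mul_eq_one_comm.mp hUUT
    have hd_cast : ∀ i : Fin n, (U *ᵥ x) i.castSucc = v i ⬝ᵥ x := by
      intro i; show U i.castSucc ⬝ᵥ x = _; rw [hUc]
    have hd_last : (U *ᵥ x) (Fin.last n) = u ⬝ᵥ x := by
      show U (Fin.last n) ⬝ᵥ x = _; rw [hUl]
    have hxdec : x = ∑ k, (U *ᵥ x) k • U k := by
      have h1 : Uᵀ *ᵥ (U *ᵥ x) = x := by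
        rw [Matrix.mulVec_mulVec, hUTU, Matrix.one_mulVec]
      funext j
      have h2 : (Uᵀ *ᵥ (U *ᵥ x)) j = (∑ k, (U *ᵥ x) k • U k) j := by
        simp [Matrix.mulVec, dotProduct, Matrix.transpose_apply,
          Finset.sum_apply, mul_comm]
      rw [← congrFun h1 j, h2]
    -- norm splitting of A x
    have hAsq : A *ᵥ x ⬝ᵥ A *ᵥ x = (Astar *ᵥ x ⬝ᵥ Astar *ᵥ x) + (Y ⬝ᵥ x) ^ 2 := by
      simp only [dotProduct]
      rw [Fin.sum_univ_castSucc]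
      congr 1
      · refine Finset.sum_congr rfl fun i _ => ?_
        have h2 : (A *ᵥ x) i.castSucc = (Astar *ᵥ x) i := by
          simp [hAstar, Matrix.mulVec, Matrix.submatrix_apply, dotProduct]
        rw [h2]
      · have h2 : (A *ᵥ x) (Fin.last n) = Y ⬝ᵥ x := by
          simp [hY, Matrix.mulVec]
        rw [h2]
        simp only [dotProduct]
        ring
    have hAx0 : 0 ≤ A *ᵥ x ⬝ᵥ A *ᵥ x := Finset.sum_nonneg fun k _ => mul_self_nonneg _
    have hAx2 : Astar *ᵥ x ⬝ᵥ Astar *ᵥ x + (Y ⬝ᵥ x) ^ 2 ≤ t ^ 2 := by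
      rw [← hAsq]
      calc A *ᵥ x ⬝ᵥ A *ᵥ x = Real.sqrt (A *ᵥ x ⬝ᵥ A *ᵥ x) ^ 2 := (Real.sq_sqrt hAx0).symm
        _ ≤ t ^ 2 := pow_le_pow_left₀ (Real.sqrt_nonneg _) hsq 2
    -- spectral expansion
    have hMu : (Astarᵀ * Astar) *ᵥ u = 0 := by
      rw [← Matrix.mulVec_mulVec, hker, Matrix.mulVec_zero]
    have hMx : (Astarᵀ * Astar) *ᵥ x = ∑ i, ((v i ⬝ᵥ x) * σ i ^ 2) • v i := by
      conv_lhs => rw [hxdec]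
      rw [show (Astarᵀ * Astar) *ᵥ (∑ k, (U *ᵥ x) k • U k)
          = ∑ k, (Astarᵀ * Astar) *ᵥ ((U *ᵥ x) k • U k) from
        map_sum (Astarᵀ * Astar).mulVecLin _ Finset.univ]
      rw [Fin.sum_univ_castSucc]
      have hlast : (Astarᵀ * Astar) *ᵥ ((U *ᵥ x) (Fin.last n) • U (Fin.last n)) = 0 := by
        rw [hUl, Matrix.mulVec_smul, hMu, smul_zero]
      rw [hlast, add_zero]
      refine Finset.sum_congr rfl fun i _ => ?_
      rw [hUc, Matrix.mulVec_smul, heig i, hd_cast, smul_smul]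
    have hAstarsq : Astar *ᵥ x ⬝ᵥ Astar *ᵥ x = ∑ i, σ i ^ 2 * (v i ⬝ᵥ x) ^ 2 := by
      have h1 : Astar *ᵥ x ⬝ᵥ Astar *ᵥ x = x ⬝ᵥ ((Astarᵀ * Astar) *ᵥ x) := by
        rw [← Matrix.mulVec_mulVec, Matrix.dotProduct_mulVec,
          ← Matrix.mulVec_transpose, dotProduct_comm]
      rw [h1, hMx, dot_sum_right]
      refine Finset.sum_congr rfl fun i _ => ?_
      rw [dotProduct_smul, smul_eq_mul, dotProduct_comm]
      ring
    have hYx : Y ⬝ᵥ x = (u ⬝ᵥ x) * Yu + ∑ i, (v i ⬝ᵥ x) * (v i ⬝ᵥ Y) := by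
      rw [dotProduct_comm Y x]
      conv_lhs => rw [hxdec]
      rw [dot_sum_left, Fin.sum_univ_castSucc]
      rw [add_comm]
      congr 1
      · rw [hUl, hd_last, smul_dotProduct, smul_eq_mul, hYudef]
      · refine Finset.sum_congr rfl fun i _ => ?_
        rw [hUc, hd_cast, smul_dotProduct, smul_eq_mul]
    have hnorm1 : (u ⬝ᵥ x) ^ 2 + ∑ i, (v i ⬝ᵥ x) ^ 2 = 1 := by
      have h1 : U *ᵥ x ⬝ᵥ U *ᵥ x = x ⬝ᵥ x := by
        rw [Matrix.dotProduct_mulVec, ← Matrix.mulVec_transpose,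
          Matrix.mulVec_mulVec, hUTU, Matrix.one_mulVec]
      have h2 : U *ᵥ x ⬝ᵥ U *ᵥ x = (∑ i, (v i ⬝ᵥ x) ^ 2) + (u ⬝ᵥ x) ^ 2 := by
        simp only [dotProduct]
        rw [Fin.sum_univ_castSucc]
        congr 1
        · refine Finset.sum_congr rfl fun i _ => ?_
          rw [hd_cast]
          simp only [dotProduct]
          ring
        · rw [hd_last]
          simp only [dotProduct]
          ring
      rw [hx] at h1
      rw [h1] at h2
      linarith
    -- Cauchy–Schwarz step
    set f : Fin (n+1) → ℝ := Fin.snoc (fun i => σ i * (v i ⬝ᵥ x)) (Y ⬝ᵥ x) with hfdef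
    set g : Fin (n+1) → ℝ := Fin.snoc (fun i => -((v i ⬝ᵥ Y) / σ i)) 1 with hgdef
    have h1 : ∑ k, f k * g k = (u ⬝ᵥ x) * Yu := by
      rw [Fin.sum_univ_castSucc]
      simp only [hfdef, hgdef, Fin.snoc_castSucc, Fin.snoc_last]
      have hterm : ∀ i : Fin n, σ i * (v i ⬝ᵥ x) * -((v i ⬝ᵥ Y) / σ i)
          = -((v i ⬝ᵥ x) * (v i ⬝ᵥ Y)) := by
        intro i
        have := (hσpos i).ne'
        field_simp
      rw [Finset.sum_congr rfl fun i _ => hterm i, Finset.sum_neg_distrib, hYx]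
      ring
    have h2 : ∑ k, f k ^ 2 = (∑ i, σ i ^ 2 * (v i ⬝ᵥ x) ^ 2) + (Y ⬝ᵥ x) ^ 2 := by
      rw [Fin.sum_univ_castSucc]
      simp only [hfdef, Fin.snoc_castSucc, Fin.snoc_last]
      congr 1
      exact Finset.sum_congr rfl fun i _ => by ring
    have h3 : ∑ k, g k ^ 2 = S + 1 := by
      rw [Fin.sum_univ_castSucc]
      simp only [hgdef, Fin.snoc_castSucc, Fin.snoc_last, one_pow]
      congr 1
      rw [hSdef]
      exact Finset.sum_congr rfl fun i _ => by rw [neg_sq, div_pow]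
    have hcs := Finset.sum_mul_sq_le_sq_mul_sq Finset.univ f g
    rw [h1, h2, h3] at hcs
    have hfb : (∑ i, σ i ^ 2 * (v i ⬝ᵥ x) ^ 2) + (Y ⬝ᵥ x) ^ 2 ≤ t ^ 2 := by
      rw [← hAstarsq]; exact hAx2
    have hCS : ((u ⬝ᵥ x) * Yu) ^ 2 ≤ t ^ 2 * (S + 1) :=
      hcs.trans (mul_le_mul_of_nonneg_right hfb (by positivity))
    -- small coefficients bound
    have hsumc : ∑ i, (v i ⬝ᵥ x) ^ 2 ≤ t ^ 2 / σm ^ 2 := by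
      rw [le_div_iff₀ (by positivity)]
      have h4 : (∑ i, (v i ⬝ᵥ x) ^ 2) * σm ^ 2 = ∑ i, σm ^ 2 * (v i ⬝ᵥ x) ^ 2 := by
        rw [Finset.sum_mul]
        exact Finset.sum_congr rfl fun i _ => by ring
      rw [h4]
      have h5 : ∑ i, σm ^ 2 * (v i ⬝ᵥ x) ^ 2 ≤ ∑ i, σ i ^ 2 * (v i ⬝ᵥ x) ^ 2 :=
        Finset.sum_le_sum fun i _ =>
          mul_le_mul_of_nonneg_right (pow_le_pow_left₀ hσm.le (hσmle i) 2) (sq_nonneg _)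
      have h6 : ∑ i, σ i ^ 2 * (v i ⬝ᵥ x) ^ 2 ≤ t ^ 2 := by
        have := sq_nonneg (Y ⬝ᵥ x); linarith
      linarith
    -- combine
    have h7 : Yu ^ 2 = ((u ⬝ᵥ x) * Yu) ^ 2 + Yu ^ 2 * (∑ i, (v i ⬝ᵥ x) ^ 2) := by
      calc Yu ^ 2 = Yu ^ 2 * ((u ⬝ᵥ x) ^ 2 + ∑ i, (v i ⬝ᵥ x) ^ 2) := by
            rw [hnorm1, mul_one]
        _ = ((u ⬝ᵥ x) * Yu) ^ 2 + Yu ^ 2 * (∑ i, (v i ⬝ᵥ x) ^ 2) := by ring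
    have h8 : Yu ^ 2 * (∑ i, (v i ⬝ᵥ x) ^ 2) ≤ Yu ^ 2 * (t ^ 2 / σm ^ 2) :=
      mul_le_mul_of_nonneg_left hsumc (sq_nonneg _)
    have h9 : t ^ 2 * (S + 1) + Yu ^ 2 * (t ^ 2 / σm ^ 2) = t ^ 2 * B := by
      rw [hBdef]
      field_simp
      ring
    calc Yu ^ 2 = ((u ⬝ᵥ x) * Yu) ^ 2 + Yu ^ 2 * (∑ i, (v i ⬝ᵥ x) ^ 2) := h7
      _ ≤ t ^ 2 * (S + 1) + Yu ^ 2 * (t ^ 2 / σm ^ 2) := add_le_add hCS h8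
      _ = t ^ 2 * B := h9
  -- apply the key estimate to approximate minimizers
  have hall : ∀ t : ℝ, ε * ν < t → Yu ^ 2 ≤ t ^ 2 * B := by
    intro t ht
    have hεν : 0 < ε * ν := by positivity
    have htpos : 0 < t := hεν.trans ht
    have hne : Set.Nonempty {r | ∃ x : Fin (n+1) → ℝ, x ⬝ᵥ x = 1 ∧
        r = Real.sqrt (A.mulVec x ⬝ᵥ A.mulVec x)} := by
      refine ⟨_, Pi.single 0 1, ?_, rfl⟩
      simp [dotProduct, Pi.single_apply]
    have hlt : sInf {r | ∃ x : Fin (n+1) → ℝ, x ⬝ᵥ x = 1 ∧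
        r = Real.sqrt (A.mulVec x ⬝ᵥ A.mulVec x)} < t := lt_of_le_of_lt hlsv ht
    obtain ⟨r, ⟨x, hx1, hx2⟩, hrt⟩ := exists_lt_of_csInf_lt hne hlt
    exact key x hx1 t htpos (by rw [← hx2]; exact hrt.le)
  -- pass to the limit t → ε ν
  have hfin : Yu ^ 2 ≤ (ε * ν) ^ 2 * B := by
    by_contra hcon
    push_neg at hcon
    have h1 : ε * ν < Real.sqrt (Yu ^ 2 / B) := by
      rw [Real.lt_sqrt (by positivity), lt_div_iff₀ hBpos]
      exact hcon
    set t : ℝ := (ε * ν + Real.sqrt (Yu ^ 2 / B)) / 2 with htdef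
    have ht1 : ε * ν < t := by rw [htdef]; linarith
    have ht2 : t < Real.sqrt (Yu ^ 2 / B) := by rw [htdef]; linarith
    have ht0 : 0 ≤ t := le_trans (by positivity) ht1.le
    have h2 := hall t ht1
    have h3 : t ^ 2 < Yu ^ 2 / B := by
      have hss := Real.sq_sqrt (show (0:ℝ) ≤ Yu ^ 2 / B by positivity)
      nlinarith [Real.sqrt_nonneg (Yu ^ 2 / B)]
    have h4 : t ^ 2 * B < Yu ^ 2 := (lt_div_iff₀ hBpos).mp h3
    linarith
  -- final algebra
  have hratio : (ε * ν) ^ 2 * (Yu ^ 2 / σm ^ 2) = q ^ 2 * Yu ^ 2 := by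
    rw [hσmdef, ← hq4]
    field_simp
  have hmain : Yu ^ 2 * (1 - q ^ 2) ≤ (ε * ν) ^ 2 * (1 + S) := by
    have hsplit : (ε * ν) ^ 2 * B = (ε * ν) ^ 2 * (1 + S) + (ε * ν) ^ 2 * (Yu ^ 2 / σm ^ 2) := by
      rw [hBdef]; ring
    rw [hsplit, hratio] at hfin
    linarith
  have hpoly : 0 ≤ 2 * q - 2 * q ^ 3 - q ^ 4 := by nlinarith [hqpos, hqhalf]
  have hfinal : Yu ^ 2 ≤ ((1 + q) * (ε * ν)) ^ 2 * (1 + S) := by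
    have m1 : (1 + q) ^ 2 * (Yu ^ 2 * (1 - q ^ 2)) ≤ (1 + q) ^ 2 * ((ε * ν) ^ 2 * (1 + S)) :=
      mul_le_mul_of_nonneg_left hmain (by positivity)
    nlinarith [mul_nonneg (sq_nonneg Yu) hpoly]
  have hRnn : (0:ℝ) ≤ (1 + q) * (ε * ν) := by positivity
  calc |Yu| = Real.sqrt (Yu ^ 2) := (Real.sqrt_sq_eq_abs Yu).symm
    _ ≤ Real.sqrt (((1 + q) * (ε * ν)) ^ 2 * (1 + S)) := Real.sqrt_le_sqrt hfinal
    _ = (1 + q) * ε * ν * Real.sqrt (1 + S) := by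
        rw [Real.sqrt_mul (sq_nonneg _), Real.sqrt_sq hRnn]
        ring
end

section
/- Let $A$ be a real $n\times n$ matrix, $Y$ its last row, $A^*$ the matrix $A$ with last row removed, $u$ a unit kernel vector of $A^*$, and $u_1,\dots,u_{n-1}$ orthonormal right singular vectors of $A^*$ with positive singular values. Define $\widetilde\chi^2(Y)=1+\sum_{i=1}^{n-1}\frac{\langle u_i,Y\rangle^2}{\sigma_i(A^*)^2}$. For any $\varepsilon>0$: if $\sigma_n(A) > \varepsilon n^{-1/2}$ then $|\langle u,Y\rangle| > \varepsilon n^{-1/2}\,\widetilde\chi(Y)$. -/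
open Matrix Finset

private lemma aux_sum_dotProduct {k l : ℕ} (f : Fin k → Fin l → ℝ) (z : Fin l → ℝ) :
    (∑ i, f i) ⬝ᵥ z = ∑ i, f i ⬝ᵥ z := by
  simp only [dotProduct, Finset.sum_apply, Finset.sum_mul]
  exact Finset.sum_comm

private lemma aux_dotProduct_sum {k l : ℕ} (z : Fin l → ℝ) (f : Fin k → Fin l → ℝ) :
    z ⬝ᵥ (∑ i, f i) = ∑ i, z ⬝ᵥ f i := by
  simp only [dotProduct, Finset.sum_apply, Finset.mul_sum]
  exact Finset.sum_comm

private lemma aux_mulVec_sum {m l k : ℕ} (M : Matrix (Fin m) (Fin l) ℝ)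
    (f : Fin k → Fin l → ℝ) :
    M.mulVec (∑ i, f i) = ∑ i, M.mulVec (f i) := by
  funext j
  simp only [Matrix.mulVec, Finset.sum_apply]
  exact aux_dotProduct_sum _ _

private lemma aux_dot_self {m k : ℕ} (M : Matrix (Fin m) (Fin k) ℝ) (w z : Fin k → ℝ) :
    M.mulVec w ⬝ᵥ M.mulVec z = w ⬝ᵥ (Mᵀ * M).mulVec z := by
  simp [← mulVec_mulVec, dotProduct_mulVec, vecMul_transpose]

set_option maxHeartbeats 1000000 in
/-- If `σ_n(A) > ε n^{-1/2}` then `|⟨u, Y⟩| > ε n^{-1/2} χ̃(Y)`, where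
`χ̃(Y)² = 1 + ∑ i ⟨u_i, Y⟩²/σ_i(A*)²`, `u` is a unit kernel vector of `A*` (the matrix
`A` with its last row `Y` removed) and the `u_i` are orthonormal right singular vectors of
`A*` with positive singular values `σ_i`, all orthogonal to `u`. -/
theorem abs_inner_gt_of_least_singular_gt (n : ℕ)
    (A : Matrix (Fin (n + 1)) (Fin (n + 1)) ℝ)
    (Astar : Matrix (Fin n) (Fin (n + 1)) ℝ)
    (hAstar : Astar = A.submatrix Fin.castSucc id)
    (Y : Fin (n + 1) → ℝ) (hY : Y = A (Fin.last n))
    (u : Fin (n + 1) → ℝ) (hker : Astar.mulVec u = 0) (hu : u ⬝ᵥ u = 1)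
    (v : Fin n → Fin (n + 1) → ℝ) (σ : Fin n → ℝ)
    (horth : ∀ i j, v i ⬝ᵥ v j = if i = j then (1 : ℝ) else 0)
    (huv : ∀ i, u ⬝ᵥ v i = 0)
    (hσpos : ∀ i, 0 < σ i)
    (heig : ∀ i, (Astarᵀ * Astar).mulVec (v i) = (σ i ^ 2) • v i)
    (ε : ℝ) (hε : 0 < ε)
    (hlsv : ε * ((n + 1 : ℕ) : ℝ) ^ (-(1 / 2 : ℝ)) < leastSingularValue A) :
    ε * ((n + 1 : ℕ) : ℝ) ^ (-(1 / 2 : ℝ)) *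
      Real.sqrt (1 + ∑ i, (v i ⬝ᵥ Y) ^ 2 / σ i ^ 2) < |u ⬝ᵥ Y| := by
  have hσne : ∀ i, (σ i : ℝ) ≠ 0 := fun i => (hσpos i).ne'
  obtain ⟨a, ha⟩ : ∃ a, u ⬝ᵥ Y = a := ⟨_, rfl⟩
  obtain ⟨b, hb⟩ : ∃ b : Fin n → ℝ, ∀ i, v i ⬝ᵥ Y = b i := ⟨_, fun _ => rfl⟩
  obtain ⟨C, hCdef⟩ : ∃ C : ℝ, 1 + ∑ i, b i ^ 2 / σ i ^ 2 = C := ⟨_, rfl⟩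
  have hsum0 : (0 : ℝ) ≤ ∑ i, b i ^ 2 / σ i ^ 2 :=
    Finset.sum_nonneg fun i _ => by positivity
  have hC1 : (1 : ℝ) ≤ C := by rw [← hCdef]; linarith
  have hC0 : (0 : ℝ) < C := lt_of_lt_of_le one_pos hC1
  obtain ⟨c, hcdef⟩ : ∃ c : Fin n → ℝ, ∀ i, a * b i / σ i ^ 2 = c i := ⟨_, fun _ => rfl⟩
  obtain ⟨x, hx⟩ : ∃ x : Fin (n + 1) → ℝ, C • u - ∑ i, c i • v i = x := ⟨_, rfl⟩
  -- dot products of x with other vectors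
  have hxz : ∀ z, x ⬝ᵥ z = C * (u ⬝ᵥ z) - ∑ i, c i * (v i ⬝ᵥ z) := by
    intro z
    rw [← hx, sub_dotProduct, aux_sum_dotProduct]
    simp [smul_dotProduct]
  have hxu : x ⬝ᵥ u = C := by
    have h2 : ∀ i, v i ⬝ᵥ u = 0 := fun i => by rw [dotProduct_comm]; exact huv i
    rw [hxz]
    simp [hu, h2]
  have hxv : ∀ j, x ⬝ᵥ v j = -(c j) := by
    intro j
    have h1 : u ⬝ᵥ v j = 0 := huv j
    rw [hxz, h1]
    simp only [horth, mul_ite, mul_one, mul_zero]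
    rw [Finset.sum_ite_eq' Finset.univ j c]
    simp
  have hxY : x ⬝ᵥ Y = a := by
    rw [hxz, ha]
    have h2 : ∀ i, c i * (v i ⬝ᵥ Y) = a * (b i ^ 2 / σ i ^ 2) := by
      intro i
      rw [hb i, ← hcdef i]
      field_simp [hσne i]
    simp only [h2, ← Finset.mul_sum]
    have : ∑ i, b i ^ 2 / σ i ^ 2 = C - 1 := by linarith
    rw [this]
    ring
  have hxx : x ⬝ᵥ x = C ^ 2 + ∑ i, c i ^ 2 := by
    rw [hxz, dotProduct_comm u x, hxu]
    have h2 : ∀ i, c i * (v i ⬝ᵥ x) = -(c i ^ 2) := by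
      intro i
      rw [dotProduct_comm, hxv i]; ring
    simp only [h2, Finset.sum_neg_distrib]
    ring
  -- norm squared of A x
  have hsub : ∀ k : Fin n, A.mulVec x (Fin.castSucc k) = Astar.mulVec x k := by
    intro k
    simp [hAstar, Matrix.mulVec, Matrix.submatrix]
  have hlast : A.mulVec x (Fin.last n) = a := by
    have h : A.mulVec x (Fin.last n) = Y ⬝ᵥ x := by simp [Matrix.mulVec, hY]
    rw [h, dotProduct_comm, hxY]
  have hAstarsq : (∑ k : Fin n, (Astar.mulVec x k) ^ 2) = a ^ 2 * (C - 1) := by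
    have hdd : (∑ k : Fin n, (Astar.mulVec x k) ^ 2) = Astar.mulVec x ⬝ᵥ Astar.mulVec x := by
      simp [dotProduct, sq]
    rw [hdd, aux_dot_self]
    have hGx : (Astarᵀ * Astar).mulVec x = ∑ i, (-(c i * σ i ^ 2)) • v i := by
      rw [← hx, Matrix.mulVec_sub, Matrix.mulVec_smul, aux_mulVec_sum]
      have hGu : (Astarᵀ * Astar).mulVec u = 0 := by
        rw [← mulVec_mulVec, hker, Matrix.mulVec_zero]
      have h3 : ∀ i, (Astarᵀ * Astar).mulVec (c i • v i) = (c i * σ i ^ 2) • v i := by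
        intro i
        rw [Matrix.mulVec_smul, heig i, smul_smul, mul_comm]
      simp only [h3, hGu, smul_zero, zero_sub]
      rw [← Finset.sum_neg_distrib]
      exact Finset.sum_congr rfl fun i _ => by rw [neg_smul]
    rw [hGx, aux_dotProduct_sum]
    have h4 : ∀ i, x ⬝ᵥ ((-(c i * σ i ^ 2)) • v i) = a ^ 2 * (b i ^ 2 / σ i ^ 2) := by
      intro i
      rw [dotProduct_smul, hxv i, smul_eq_mul, ← hcdef i]
      field_simp [hσne i]
    simp only [h4, ← Finset.mul_sum]
    have : ∑ i, b i ^ 2 / σ i ^ 2 = C - 1 := by linarith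
    rw [this]
  have hAA : A.mulVec x ⬝ᵥ A.mulVec x = a ^ 2 * C := by
    have h : A.mulVec x ⬝ᵥ A.mulVec x = ∑ j, (A.mulVec x j) ^ 2 := by
      simp [dotProduct, sq]
    rw [h, Fin.sum_univ_castSucc]
    simp only [hsub, hlast, hAstarsq]
    ring
  -- the normalized test vector and the bound on the least singular value
  have hxxge : C ^ 2 ≤ x ⬝ᵥ x := by
    have : (0 : ℝ) ≤ ∑ i, c i ^ 2 := Finset.sum_nonneg fun i _ => by positivity
    rw [hxx]; linarith
  have hxxpos : (0 : ℝ) < x ⬝ᵥ x := lt_of_lt_of_le (by positivity) hxxge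
  obtain ⟨N, hNdef⟩ : ∃ N : ℝ, Real.sqrt (x ⬝ᵥ x) = N := ⟨_, rfl⟩
  have hNpos : 0 < N := hNdef ▸ Real.sqrt_pos.mpr hxxpos
  have hN2 : N ^ 2 = x ⬝ᵥ x := by rw [← hNdef]; exact Real.sq_sqrt hxxpos.le
  have hNC : C ≤ N := by nlinarith
  obtain ⟨sC, hsCdef⟩ : ∃ s : ℝ, Real.sqrt C = s := ⟨_, rfl⟩
  have hsC2 : sC ^ 2 = C := by rw [← hsCdef]; exact Real.sq_sqrt hC0.le
  have hsCpos : 0 < sC := by rw [← hsCdef]; exact Real.sqrt_pos.mpr hC0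
  have hmem : leastSingularValue A ≤ |a| * sC / N := by
    apply csInf_le
    · refine ⟨0, ?_⟩
      rintro r ⟨w, -, rfl⟩
      exact Real.sqrt_nonneg _
    · refine ⟨N⁻¹ • x, ?_, ?_⟩
      · rw [smul_dotProduct, dotProduct_smul, smul_eq_mul, smul_eq_mul, ← hN2]
        field_simp
      · rw [Matrix.mulVec_smul, smul_dotProduct, dotProduct_smul, smul_eq_mul, smul_eq_mul,
          hAA]
        rw [show N⁻¹ * (N⁻¹ * (a ^ 2 * C)) = (|a| * sC / N) ^ 2 by
          rw [div_pow, mul_pow, hsC2, sq_abs, div_eq_mul_inv,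
            show ((N : ℝ) ^ 2)⁻¹ = N⁻¹ * N⁻¹ by rw [sq, mul_inv]]
          ring]
        rw [Real.sqrt_sq (by positivity)]
  have hkey : leastSingularValue A * N ≤ |a| * sC := by
    have h := mul_le_mul_of_nonneg_right hmem hNpos.le
    rwa [div_mul_cancel₀ _ hNpos.ne'] at h
  -- conclusion
  have htpos : 0 < ε * ((n + 1 : ℕ) : ℝ) ^ (-(1 / 2 : ℝ)) :=
    mul_pos hε (Real.rpow_pos_of_pos (by positivity) _)
  have hgoal : ∀ i, (v i ⬝ᵥ Y) ^ 2 / σ i ^ 2 = b i ^ 2 / σ i ^ 2 := fun i => by rw [hb i]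
  simp only [hgoal]
  rw [hCdef, hsCdef, ha]
  have h1 : ε * ((n + 1 : ℕ) : ℝ) ^ (-(1 / 2 : ℝ)) * N < leastSingularValue A * N :=
    mul_lt_mul_of_pos_right hlsv hNpos
  have h3 := mul_le_mul_of_nonneg_left hNC htpos.le
  nlinarith [h1, hkey, h3, hsC2, hsCpos, htpos]
end
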